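/- arXiv:1601.04786 — 7 statements merged into one kernel-verified Lean document; each statement's English description precedes it below -/
import Mathlib

section
/- For every i ≥ 2 and every n ≥ 1, the i-Fibonacci word f_n^{[i]} does not contain the subword "11". -/
def fibWord (i : ℕ) : ℕ → List Bool
  | 0 => []
  | 1 => [false]
  | 2 => List.replicate (i - 1) false ++ [true]
  | n + 3 => fibWord i (n + 2) ++ fibWord i (n + 1)

lemma rep_chain : ∀ j, List.Chain' (fun a b => a = false ∨ b = false)
    (List.replicate j false ++ [true])
  | 0 => by simp [List.Chain']
  | j + 1 => by
    unfold List.Chain'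
    rw [List.replicate_succ, List.cons_append, List.isChain_cons]
    exact ⟨fun y _ => Or.inl rfl, rep_chain j⟩

lemma fib_aux (i : ℕ) (hi : 2 ≤ i) : ∀ n, 1 ≤ n →
    (fibWord i n).head? = some false ∧
      List.Chain' (fun a b => a = false ∨ b = false) (fibWord i n) := by
  intro n
  induction n using Nat.strong_induction_on with
  | _ n ih =>
    match n with
    | 0 => intro h; omega
    | 1 => intro _; simp [fibWord, List.Chain']
    | 2 =>
      intro _
      obtain ⟨j, rfl⟩ : ∃ j, i = j + 2 := ⟨i - 2, by omega⟩
      refine ⟨?_, ?_⟩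
      · simp [fibWord, List.replicate_succ]
      · simpa [fibWord] using rep_chain (j + 2 - 1)
    | (m + 3) =>
      intro _
      obtain ⟨h1, c1⟩ := ih (m + 2) (by omega) (by omega)
      obtain ⟨h2, c2⟩ := ih (m + 1) (by omega) (by omega)
      constructor
      · show (fibWord i (m + 2) ++ fibWord i (m + 1)).head? = some false
        rw [List.head?_append_of_ne_nil]
        · exact h1
        · intro h; rw [h] at h1; simp at h1
      · show List.Chain' _ (fibWord i (m + 2) ++ fibWord i (m + 1))
        unfold List.Chain'
        rw [List.isChain_append]
        refine ⟨c1, c2, fun x _ y hy => ?_⟩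
        rw [h2] at hy
        exact Or.inr (Option.mem_some_iff.mp hy).symm

/-- The subword `11` never occurs in an `i`-Fibonacci word. -/
theorem no_double_one (i n : ℕ) (hi : 2 ≤ i) (hn : 1 ≤ n) :
    ¬ [true, true] <:+: fibWord i n := by
  intro h
  have c := (fib_aux i hi n hn).2
  have := c.infix h
  simp [List.Chain', List.isChain_cons_cons] at this
end

section
/- For every i ≥ 2 and every n ≥ 3, the word obtained from f_n^{[i]} by deleting its last two letters is a palindrome. -/
lemma rep_shift (j : ℕ) (X : List Bool) :
    List.replicate j false ++ false :: X = false :: (List.replicate j false ++ X) := by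
  induction j with
  | zero => rfl
  | succ k ih => simp [List.replicate_succ, ih]

lemma dl2 (l₁ l₂ : List Bool) (h : 2 ≤ l₂.length) :
    (l₁ ++ l₂).dropLast.dropLast = l₁ ++ l₂.dropLast.dropLast := by
  match l₂, h with
  | a :: b :: t, _ => simp [List.dropLast_append_cons]

lemma len2 (i : ℕ) (hi : 2 ≤ i) : ∀ n, 2 ≤ (fibWord i (n + 2)).length
  | 0 => by simp [fibWord]; omega
  | n + 1 => by
    have := len2 i hi n
    simp only [show n + 1 + 2 = n + 3 from rfl, fibWord, List.length_append]
    omega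

lemma gsplit (i : ℕ) (hi : 2 ≤ i) (n : ℕ) :
    (fibWord i (n + 4)).dropLast.dropLast
      = fibWord i (n + 3) ++ (fibWord i (n + 2)).dropLast.dropLast := by
  have h : fibWord i (n + 4) = fibWord i (n + 3) ++ fibWord i (n + 2) := rfl
  rw [h, dl2 _ _ (len2 i hi n)]

lemma g2_eq (i : ℕ) (hi : 2 ≤ i) :
    (fibWord i 2).dropLast.dropLast = List.replicate (i - 2) false := by
  obtain ⟨j, rfl⟩ : ∃ j, i = j + 2 := ⟨i - 2, by omega⟩
  have h : fibWord (j + 2) 2 = (List.replicate j false ++ [false]) ++ [true] := by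
    show List.replicate (j + 1) false ++ [true] = _
    rw [List.replicate_succ']
  rw [h, List.dropLast_concat, List.dropLast_concat]
  simp

lemma g3_eq (i : ℕ) (hi : 2 ≤ i) :
    (fibWord i 3).dropLast.dropLast = List.replicate (i - 1) false := by
  show ((List.replicate (i - 1) false ++ [true] ++ [false]).dropLast).dropLast = _
  simp

lemma g4_eq (i : ℕ) (hi : 2 ≤ i) :
    (fibWord i 4).dropLast.dropLast
      = List.replicate (i - 1) false ++ true :: List.replicate (i - 1) false := by
  have h : (fibWord i 4).dropLast.dropLast
      = fibWord i 3 ++ (fibWord i 2).dropLast.dropLast := gsplit i hi 0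
  rw [h, g2_eq i hi]
  obtain ⟨j, rfl⟩ : ∃ j, i = j + 2 := ⟨i - 2, by omega⟩
  show List.replicate (j + 2 - 1) false ++ [true] ++ [false] ++ _ = _
  simp [List.replicate_succ, rep_shift]

/-- The swap lemma: `f (n+4) ++ g (n+3) = f (n+3) ++ g (n+4)`. -/
lemma swap (i : ℕ) (hi : 2 ≤ i) : ∀ n,
    fibWord i (n + 4) ++ (fibWord i (n + 3)).dropLast.dropLast
      = fibWord i (n + 3) ++ (fibWord i (n + 4)).dropLast.dropLast
  | 0 => by
    rw [g3_eq i hi, g4_eq i hi]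
    show fibWord i 3 ++ fibWord i 2 ++ _ = fibWord i 3 ++ _
    obtain ⟨j, rfl⟩ : ∃ j, i = j + 2 := ⟨i - 2, by omega⟩
    show _ ++ (List.replicate (j + 2 - 1) false ++ [true]) ++ _ = _
    simp [List.replicate_succ, rep_shift]
  | n + 1 => by
    have h5 : fibWord i (n + 5) = fibWord i (n + 4) ++ fibWord i (n + 3) := rfl
    have hg := gsplit i hi (n + 1)
    rw [show n + 1 + 4 = n + 5 from rfl, show n + 1 + 3 = n + 4 from rfl,
      show n + 1 + 2 = n + 3 from rfl] at hg
    rw [show n + 1 + 4 = n + 5 from rfl, show n + 1 + 3 = n + 4 from rfl,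
      hg, h5, List.append_assoc]
    exact congrArg _ (swap i hi n).symm

/-- Suffix decomposition: `f (n+3) = g (n+3) ++ tb n`. -/
lemma fsplit (i : ℕ) (hi : 2 ≤ i) : ∀ n,
    fibWord i (n + 3) = (fibWord i (n + 3)).dropLast.dropLast
      ++ (if n % 2 = 0 then [true, false] else [false, true])
  | 0 => by
    rw [g3_eq i hi]
    show List.replicate (i - 1) false ++ [true] ++ [false] = _
    simp
  | 1 => by
    rw [show (1:ℕ) + 3 = 4 from rfl, g4_eq i hi]
    show fibWord i 3 ++ (List.replicate (i - 1) false ++ [true]) = _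
    obtain ⟨j, rfl⟩ : ∃ j, i = j + 2 := ⟨i - 2, by omega⟩
    show List.replicate (j + 2 - 1) false ++ [true] ++ [false] ++ _ = _
    simp [List.replicate_succ, rep_shift]
  | n + 2 => by
    have h : fibWord i (n + 5) = fibWord i (n + 4) ++ fibWord i (n + 3) := rfl
    have hg := gsplit i hi (n + 1)
    rw [show n + 1 + 4 = n + 5 from rfl, show n + 1 + 3 = n + 4 from rfl,
      show n + 1 + 2 = n + 3 from rfl] at hg
    rw [show n + 2 + 3 = n + 5 from rfl, hg]
    conv_lhs => rw [h, fsplit i hi n]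
    have h2 : (n + 2) % 2 = n % 2 := Nat.add_mod_right n 2
    rw [h2, List.append_assoc, ← fsplit i hi n]
  termination_by n => n

lemma pal (i : ℕ) (hi : 2 ≤ i) : ∀ n,
    ((fibWord i (n + 3)).dropLast.dropLast).reverse
      = (fibWord i (n + 3)).dropLast.dropLast
  | 0 => by rw [g3_eq i hi]; simp
  | 1 => by
    rw [show (1:ℕ) + 3 = 4 from rfl, g4_eq i hi]
    simp [List.reverse_append]
  | n + 2 => by
    have hg := gsplit i hi (n + 1)
    rw [show n + 1 + 4 = n + 5 from rfl, show n + 1 + 3 = n + 4 from rfl,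
      show n + 1 + 2 = n + 3 from rfl] at hg
    have hf := fsplit i hi (n + 1)
    rw [show n + 1 + 3 = n + 4 from rfl] at hf
    have hp1 := pal i hi n
    have hp2 := pal i hi (n + 1)
    rw [show n + 1 + 3 = n + 4 from rfl] at hp2
    rw [show n + 2 + 3 = n + 5 from rfl, hg, List.reverse_append, hp1]
    conv_lhs => rw [hf]
    rw [List.reverse_append, hp2]
    have htb : (if (n + 1) % 2 = 0 then [true, false] else [false, true]).reverse
        = (if n % 2 = 0 then [true, false] else [false, true]) := by
      rcases Nat.even_or_odd n with h | h
      · have h1 : n % 2 = 0 := Nat.even_iff.mp h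
        have h2 : (n + 1) % 2 = 1 := by omega
        simp [h1, h2]
      · have h1 : n % 2 = 1 := Nat.odd_iff.mp h
        have h2 : (n + 1) % 2 = 0 := by omega
        simp [h1, h2]
    rw [htb]
    calc (fibWord i (n + 3)).dropLast.dropLast
          ++ ((if n % 2 = 0 then [true, false] else [false, true])
            ++ (fibWord i (n + 4)).dropLast.dropLast)
        = fibWord i (n + 3) ++ (fibWord i (n + 4)).dropLast.dropLast := by
          rw [← List.append_assoc, ← fsplit i hi n]
      _ = fibWord i (n + 4) ++ (fibWord i (n + 3)).dropLast.dropLast :=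
          (swap i hi n).symm
  termination_by n => n

/-- Deleting the last two letters of `f n` (n ≥ 3) leaves a palindrome. -/
theorem fibWord_palindrome (i n : ℕ) (hi : 2 ≤ i) (hn : 3 ≤ n) :
    ((fibWord i n).dropLast.dropLast).reverse = (fibWord i n).dropLast.dropLast := by
  obtain ⟨m, rfl⟩ : ∃ m, n = m + 3 := ⟨n - 3, by omega⟩
  exact pal i hi m
end

section
/- For every i ≥ 2 and every n ≥ 7, the i-Fibonacci word has the five-partite structure f_n = f_{n-3} f_{n-3} f_{n-6} l_{n-3} l_{n-3}, where l_m denotes the word obtained from f_m by swapping its last two letters. -/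
/-- The word obtained by swapping the last two letters of `w`. -/
def swapLastTwo (w : List Bool) : List Bool :=
  w.dropLast.dropLast ++ (w.drop (w.length - 2)).reverse

lemma swapLastTwo_concat2 (w : List Bool) (a b : Bool) :
    swapLastTwo (w ++ [a, b]) = w ++ [b, a] := by
  have h1 : (w ++ [a, b]).dropLast = w ++ [a] := by
    rw [show w ++ [a, b] = (w ++ [a]) ++ [b] by simp, List.dropLast_concat]
  have h2 : (w ++ [a]).dropLast = w := List.dropLast_concat ..
  simp [swapLastTwo, h1, h2, List.drop_left']

lemma swapLastTwo_append (u v : List Bool) (h : 2 ≤ v.length) :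
    swapLastTwo (u ++ v) = u ++ swapLastTwo v := by
  obtain ⟨a, b, t, hv⟩ : ∃ a b t, v.reverse = a :: b :: t := by
    rcases hv : v.reverse with _ | ⟨a, _ | ⟨b, t⟩⟩
    · rw [List.reverse_eq_nil_iff] at hv; subst hv; simp at h
    · have := congrArg List.length hv
      rw [List.length_reverse] at this; simp at this; omega
    · exact ⟨a, b, t, rfl⟩
  have hv2 : v = t.reverse ++ [b, a] := by
    have := congrArg List.reverse hv; simpa using this
  subst hv2
  rw [← List.append_assoc, swapLastTwo_concat2, swapLastTwo_concat2, List.append_assoc]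

lemma rep_comm (j : ℕ) (l : List Bool) :
    List.replicate j false ++ false :: l = false :: (List.replicate j false ++ l) := by
  induction j with
  | zero => simp
  | succ j ih => simp [List.replicate_succ, ih]

lemma fibWord_len (i : ℕ) (hi : 2 ≤ i) : ∀ m, 2 ≤ (fibWord i (m + 2)).length
  | 0 => by simp [fibWord]; omega
  | m + 1 => by
    have := fibWord_len i hi m
    calc 2 ≤ (fibWord i (m + 2)).length := this
    _ ≤ (fibWord i (m + 3)).length := by simp [fibWord]

lemma key (i : ℕ) (hi : 2 ≤ i) :
    ∀ m, swapLastTwo (fibWord i (m + 3)) = fibWord i (m + 1) ++ fibWord i (m + 2)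
  | 0 => by
    obtain ⟨j, hj⟩ : ∃ j, i - 1 = j + 1 := ⟨i - 2, by omega⟩
    show swapLastTwo ((List.replicate (i-1) false ++ [true]) ++ [false]) = _
    rw [List.append_assoc, show ([true] ++ [false] : List Bool) = [true, false] from rfl,
      swapLastTwo_concat2]
    show _ = [false] ++ (List.replicate (i-1) false ++ [true])
    rw [show ([false, true] : List Bool) = false :: [true] from rfl, rep_comm]
    rfl
  | 1 => by
    obtain ⟨j, hj⟩ : ∃ j, i - 1 = j + 1 := ⟨i - 2, by omega⟩
    have hf2 : fibWord i 2 = List.replicate j false ++ [false, true] := by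
      show List.replicate (i-1) false ++ [true] = _
      rw [hj, List.replicate_succ']; simp
    show swapLastTwo (fibWord i 3 ++ fibWord i 2) = fibWord i 2 ++ fibWord i 3
    have hf3 : fibWord i 3 = fibWord i 2 ++ [false] := rfl
    rw [hf2, hf3, hf2, ← List.append_assoc, swapLastTwo_concat2]
    simp [rep_comm, List.append_assoc]
  | (m + 2) => by
    have ih := key i hi m
    show swapLastTwo (fibWord i (m + 4) ++ fibWord i (m + 3)) = _
    rw [swapLastTwo_append _ _ (fibWord_len i hi (m + 1)), ih]
    show fibWord i (m + 3) ++ fibWord i (m + 2) ++ (fibWord i (m + 1) ++ fibWord i (m + 2)) =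
      fibWord i (m + 3) ++ (fibWord i (m + 2) ++ fibWord i (m + 1) ++ fibWord i (m + 2))
    simp [fibWord, List.append_assoc]

/-- Five-partite structure: `f n = f (n-3) f (n-3) f (n-6) l (n-3) l (n-3)` for n ≥ 7,
where `l m` is `f m` with its last two letters swapped. -/
theorem fibWord_five_partite (i n : ℕ) (hi : 2 ≤ i) (hn : 7 ≤ n) :
    fibWord i n =
      fibWord i (n - 3) ++ fibWord i (n - 3) ++ fibWord i (n - 6) ++
        swapLastTwo (fibWord i (n - 3)) ++ swapLastTwo (fibWord i (n - 3)) := by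
  obtain ⟨k, rfl⟩ : ∃ k, n = k + 7 := ⟨n - 7, by omega⟩
  have h3 : k + 7 - 3 = (k + 1) + 3 := by omega
  have h6 : k + 7 - 6 = k + 1 := by omega
  rw [h3, h6, key i hi (k + 1)]
  have e3 : fibWord i (k+3) = fibWord i (k+2) ++ fibWord i (k+1) := rfl
  have e4 : fibWord i ((k+1)+3) = fibWord i (k+3) ++ fibWord i (k+2) := rfl
  show (fibWord i (k+5) ++ fibWord i (k+4)) ++ (fibWord i (k+4) ++ fibWord i (k+3)) = _
  have e5 : fibWord i (k+5) = fibWord i (k+4) ++ fibWord i (k+3) := rfl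
  have e4' : fibWord i (k+4) = fibWord i (k+3) ++ fibWord i (k+2) := rfl
  simp only [show k+1+1 = k+2 from rfl, show k+1+2 = k+3 from rfl, e5, e4, e4', e3,
    List.append_assoc]
end

section
/- Let α ∈ [0, π/2] and define R = ((1 + cos α) + sqrt((1 + cos α)^2 + 1))^{-1}. Then 0 < R < 1, and the unique real s solving 4R^s + R^{2s} = 1 is s = ln(√5 − 2)/ln R. -/
open Real

/-- For `R = ((1+cos α) + √((1+cos α)²+1))⁻¹` with `α ∈ [0, π/2]`, we have
`0 < R < 1`, and `s = ln(√5 − 2)/ln R` is the unique real solution of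
`4 Rˢ + R^{2s} = 1`. -/
theorem dimension_equation (α : ℝ) (hα : α ∈ Set.Icc 0 (π / 2))
    (R : ℝ) (hR : R = ((1 + cos α) + Real.sqrt ((1 + cos α) ^ 2 + 1))⁻¹) :
    0 < R ∧ R < 1 ∧
    (4 * R ^ (Real.log (Real.sqrt 5 - 2) / Real.log R) +
        R ^ (2 * (Real.log (Real.sqrt 5 - 2) / Real.log R)) = 1 ∧
      ∀ s : ℝ, 4 * R ^ s + R ^ (2 * s) = 1 →
        s = Real.log (Real.sqrt 5 - 2) / Real.log R) := by
  obtain ⟨h0, h1⟩ := hα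
  have hcos : 0 ≤ cos α := Real.cos_nonneg_of_mem_Icc ⟨by linarith [Real.pi_pos], h1⟩
  set c : ℝ := 1 + cos α with hc
  have hc1 : 1 ≤ c := by simp [hc]; linarith
  have hs1 : 1 ≤ Real.sqrt (c ^ 2 + 1) := by
    nlinarith [Real.sq_sqrt (show (0:ℝ) ≤ c ^ 2 + 1 by positivity),
      Real.sqrt_nonneg (c ^ 2 + 1)]
  have hRpos : 0 < R := by rw [hR]; exact inv_pos.mpr (by linarith)
  have hRlt1 : R < 1 := by
    rw [hR]
    exact inv_lt_one_of_one_lt₀ (by linarith)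
  have hlog : Real.log R < 0 := Real.log_neg hRpos hRlt1
  have hlogne : Real.log R ≠ 0 := hlog.ne
  have h5 : (Real.sqrt 5) ^ 2 = 5 := Real.sq_sqrt (by norm_num)
  have h52 : (2:ℝ) < Real.sqrt 5 := by nlinarith [Real.sqrt_nonneg 5]
  have hxpos : (0:ℝ) < Real.sqrt 5 - 2 := by linarith
  set s0 : ℝ := Real.log (Real.sqrt 5 - 2) / Real.log R with hs0
  have hRs0 : R ^ s0 = Real.sqrt 5 - 2 := by
    rw [Real.rpow_def_of_pos hRpos, hs0, mul_comm, div_mul_cancel₀ _ hlogne, Real.exp_log hxpos]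
  have hdouble : ∀ s : ℝ, R ^ (2 * s) = (R ^ s) ^ 2 := by
    intro s
    rw [mul_comm, Real.rpow_mul hRpos.le, Real.rpow_two]
  refine ⟨hRpos, hRlt1, ?_, ?_⟩
  · rw [hdouble, hRs0]; nlinarith
  · intro s hs
    have hx : 0 < R ^ s := Real.rpow_pos_of_pos hRpos s
    rw [hdouble] at hs
    have hsq : (R ^ s + 2) ^ 2 = 5 := by nlinarith
    have : R ^ s + 2 = Real.sqrt 5 := by
      rw [← hsq]; exact (Real.sqrt_sq (by positivity)).symm
    have hRs : R ^ s = Real.sqrt 5 - 2 := by linarith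
    have := congrArg Real.log hRs
    rw [Real.log_rpow hRpos] at this
    rw [eq_div_iff hlogne]
    linarith
end

section
/- For α ∈ (0, π/2], the value s(α) = ln(√5 − 2) / ln( ((1 + cos α) + sqrt((1 + cos α)^2 + 1))^{-1} ) satisfies 1 < s(α) ≤ 2, and lim_{α → 0+} s(α) = 1. -/
open Real Filter

/-- The Hausdorff dimension of the Fibonacci fractal with drawing angle `α`. -/
noncomputable def fibDim (α : ℝ) : ℝ :=
  Real.log (Real.sqrt 5 - 2) /
    Real.log (((1 + Real.cos α) + Real.sqrt ((1 + Real.cos α) ^ 2 + 1))⁻¹)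

lemma sq_sqrt5 : Real.sqrt 5 ^ 2 = 5 := Real.sq_sqrt (by norm_num)
lemma sq_sqrt2 : Real.sqrt 2 ^ 2 = 2 := Real.sq_sqrt (by norm_num)

lemma sqrt5_gt_two : 2 < Real.sqrt 5 := by
  nlinarith [sq_sqrt5, Real.sqrt_nonneg 5]

lemma sqrt2_gt_one : 1 < Real.sqrt 2 := by
  nlinarith [sq_sqrt2, Real.sqrt_nonneg 2]

lemma log_sqrt5_sub_two : Real.log (Real.sqrt 5 - 2) = -Real.log (Real.sqrt 5 + 2) := by
  have h : (Real.sqrt 5 - 2) * (Real.sqrt 5 + 2) = 1 := by nlinarith [sq_sqrt5]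
  rw [eq_inv_of_mul_eq_one_left h, Real.log_inv]

/-- For `α ∈ (0, π/2]`, `1 < s(α) ≤ 2`, and `s(α) → 1` as `α → 0⁺`. -/
theorem fibDim_bounds_and_limit :
    (∀ α ∈ Set.Ioc 0 (π / 2), 1 < fibDim α ∧ fibDim α ≤ 2) ∧
    Tendsto fibDim (nhdsWithin 0 (Set.Ioi 0)) (nhds 1) := by
  constructor
  · intro α hα
    obtain ⟨hα0, hα2⟩ := hα
    have hcos0 : 0 ≤ Real.cos α :=
      Real.cos_nonneg_of_mem_Icc ⟨by linarith [Real.pi_pos], hα2⟩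
    have hcos1 : Real.cos α < 1 := by
      have := Real.cos_lt_cos_of_nonneg_of_le_pi le_rfl
        (by linarith [Real.pi_pos]) hα0
      simpa using this
    set c : ℝ := 1 + Real.cos α with hc
    have hc1 : 1 ≤ c := by simp [hc]; linarith
    have hc2 : c < 2 := by simp [hc]; linarith
    set L : ℝ := c + Real.sqrt (c ^ 2 + 1) with hL
    have hsnn := Real.sqrt_nonneg (c ^ 2 + 1)
    have hL1 : 1 + Real.sqrt 2 ≤ L := by
      have h2 : Real.sqrt 2 ≤ Real.sqrt (c ^ 2 + 1) := by
        apply Real.sqrt_le_sqrt; nlinarith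
      simp only [hL]; linarith
    have hL2 : L < 2 + Real.sqrt 5 := by
      have h5 : Real.sqrt (c ^ 2 + 1) < Real.sqrt 5 := by
        apply Real.sqrt_lt_sqrt (by positivity); nlinarith
      simp only [hL]; linarith
    have hL0 : 0 < L := by linarith
    have hlogL_lb : Real.log (1 + Real.sqrt 2) ≤ Real.log L :=
      Real.log_le_log (by positivity) hL1
    have hlogL_pos : 0 < Real.log L := by
      have : (0:ℝ) < Real.log (1 + Real.sqrt 2) :=
        Real.log_pos (by linarith [sqrt2_gt_one])
      linarith
    have hlogL_ub : Real.log L < Real.log (Real.sqrt 5 + 2) :=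
      Real.log_lt_log hL0 (by linarith)
    have heq : fibDim α = Real.log (Real.sqrt 5 + 2) / Real.log L := by
      unfold fibDim
      rw [← hc, ← hL, Real.log_inv, log_sqrt5_sub_two, neg_div_neg_eq]
    rw [heq]
    constructor
    · rw [lt_div_iff₀ hlogL_pos]; linarith
    · rw [div_le_iff₀ hlogL_pos]
      have hsq : Real.log (Real.sqrt 5 + 2) ≤ 2 * Real.log (1 + Real.sqrt 2) := by
        have h1 : (Real.sqrt 5 + 2) ≤ (1 + Real.sqrt 2) ^ 2 := by
          nlinarith [sq_sqrt2, sq_sqrt5, Real.sqrt_nonneg 2, Real.sqrt_nonneg 5,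
            sqrt2_gt_one]
        calc Real.log (Real.sqrt 5 + 2) ≤ Real.log ((1 + Real.sqrt 2) ^ 2) :=
              Real.log_le_log (by linarith [sqrt5_gt_two]) h1
          _ = 2 * Real.log (1 + Real.sqrt 2) := by
              rw [Real.log_pow]; push_cast; ring
      linarith
  · have hfc : Continuous fun α : ℝ =>
        (1 + Real.cos α) + Real.sqrt ((1 + Real.cos α) ^ 2 + 1) := by
      fun_prop
    have hf0 : ((1 + Real.cos 0) + Real.sqrt ((1 + Real.cos 0) ^ 2 + 1))
        = 2 + Real.sqrt 5 := by
      norm_num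
    have hfpos : ∀ α : ℝ, 0 < (1 + Real.cos α) + Real.sqrt ((1 + Real.cos α) ^ 2 + 1) := by
      intro α
      have h1 : Real.sqrt ((1 + Real.cos α) ^ 2 + 1) ≥ 1 := by
        have := Real.sqrt_le_sqrt (show (1:ℝ) ≤ (1 + Real.cos α) ^ 2 + 1 by
          nlinarith [sq_nonneg (1 + Real.cos α)])
        simpa using this
      nlinarith [Real.neg_one_le_cos α]
    have hne : ∀ α : ℝ, ((1 + Real.cos α) + Real.sqrt ((1 + Real.cos α) ^ 2 + 1)) ≠ 0 :=
      fun α => (hfpos α).ne'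
    have hden_ne : Real.log (((1 + Real.cos 0) +
        Real.sqrt ((1 + Real.cos 0) ^ 2 + 1))⁻¹) ≠ 0 := by
      rw [hf0, Real.log_inv]
      exact neg_ne_zero.mpr (Real.log_pos (by linarith [sqrt5_gt_two])).ne'
    have hca : ContinuousAt fibDim 0 := by
      unfold fibDim
      have hinv : ContinuousAt (fun α : ℝ =>
          ((1 + Real.cos α) + Real.sqrt ((1 + Real.cos α) ^ 2 + 1))⁻¹) 0 :=
        hfc.continuousAt.inv₀ (hne 0)
      have hlog : ContinuousAt (fun α : ℝ =>
          Real.log (((1 + Real.cos α) + Real.sqrt ((1 + Real.cos α) ^ 2 + 1))⁻¹)) 0 := by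
        have h0 : (((1 + Real.cos 0) + Real.sqrt ((1 + Real.cos 0) ^ 2 + 1))⁻¹) ≠ 0 :=
          inv_ne_zero (hne 0)
        exact hinv.log h0
      exact continuousAt_const.div hlog hden_ne
    have hval : fibDim 0 = 1 := by
      unfold fibDim
      rw [hf0, Real.log_inv, log_sqrt5_sub_two, neg_div_neg_eq,
        show Real.sqrt 5 + 2 = 2 + Real.sqrt 5 by ring]
      exact div_self (Real.log_pos (by linarith [sqrt5_gt_two])).ne'
    have := hca.tendsto
    rw [hval] at this
    exact this.mono_left nhdsWithin_le_nhds
end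

section
/- Fix α ∈ (0, π/2). Let (w_k) and (h_k) be positive real sequences satisfying w_k = 2(1 + cos α) w_{k-1} + w_{k-2} and h_k = h_{k-1} + (sin α) w_{k-1}, with w_0, w_1 > 0 and h_0 ≥ 0. Then lim_{k→∞} w_k / h_k = (r_+ − 1)/sin α, where r_+ = (1 + cos α) + sqrt((1 + cos α)^2 + 1). -/
open Real Filter

set_option maxHeartbeats 1000000

/-- Aspect ratio limit: if `w` and `h` are positive sequences with
`w k = 2(1+cos α) w (k-1) + w (k-2)` and `h k = h (k-1) + sin α · w (k-1)`,
with `w 0, w 1 > 0` and `h 0 ≥ 0`, then `w k / h k → (r₊ − 1)/sin α` where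
`r₊ = (1+cos α) + √((1+cos α)² + 1)`. -/
theorem aspect_ratio_limit (α : ℝ) (hα : α ∈ Set.Ioo 0 (π / 2))
    (w h : ℕ → ℝ) (hwpos : ∀ k, 0 < w k) (hhpos : ∀ k, 1 ≤ k → 0 < h k)
    (hw0 : 0 < w 0) (hw1 : 0 < w 1) (hh0 : 0 ≤ h 0)
    (hw : ∀ k, w (k + 2) = 2 * (1 + cos α) * w (k + 1) + w k)
    (hh : ∀ k, h (k + 1) = h k + sin α * w k) :
    Tendsto (fun k => w k / h k) atTop
      (nhds ((((1 + cos α) + Real.sqrt ((1 + cos α) ^ 2 + 1)) - 1) / sin α)) := by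
  obtain ⟨hα0, hα2⟩ := hα
  have hsin : 0 < Real.sin α :=
    Real.sin_pos_of_pos_of_lt_pi hα0 (by linarith [Real.pi_pos])
  have hcos : 0 < Real.cos α := Real.cos_pos_of_mem_Ioo ⟨by linarith, hα2⟩
  set b := 1 + Real.cos α with hbdef
  have hb1 : 1 < b := by simp [hbdef]; linarith
  set s := Real.sqrt (b ^ 2 + 1) with hsdef
  have hs0 : 0 < s := Real.sqrt_pos.mpr (by positivity)
  have hs2 : s ^ 2 = b ^ 2 + 1 := Real.sq_sqrt (by positivity)
  have hsb : b < s := by nlinarith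
  have hsb1 : s < b + 1 := by nlinarith
  set rp := b + s with hrpdef
  set rm := b - s with hrmdef
  have hrp1 : 1 < rp := by simp only [hrpdef]; nlinarith
  have hrm0 : rm < 0 := by simp only [hrmdef]; linarith
  have hrm1 : -1 < rm := by simp only [hrmdef]; linarith
  have hrpq : rp ^ 2 = 2 * b * rp + 1 := by simp only [hrpdef]; nlinarith
  have hrmq : rm ^ 2 = 2 * b * rm + 1 := by simp only [hrmdef]; nlinarith
  have hdden : (0:ℝ) < rp - rm := by simp only [hrpdef, hrmdef]; linarith
  set A := (w 1 - rm * w 0) / (rp - rm) with hAdef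
  set B := (rp * w 0 - w 1) / (rp - rm) with hBdef
  have hA : 0 < A := div_pos (by nlinarith) hdden
  have hrp0 : (0:ℝ) < rp := by linarith
  clear_value b s rp rm A B
  -- closed form for w
  have hwk : ∀ k, w k = A * rp ^ k + B * rm ^ k := by
    intro k
    induction k using Nat.twoStepInduction with
    | zero =>
      rw [pow_zero, pow_zero, mul_one, mul_one, hAdef, hBdef]
      field_simp
      ring
    | one =>
      rw [pow_one, pow_one, hAdef, hBdef]
      field_simp
      ring
    | more k ih2 ih1 =>
      have e1 : rp ^ (k + 2) = 2 * b * rp ^ (k + 1) + rp ^ k := by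
        have : rp ^ (k + 2) = rp ^ k * rp ^ 2 := by ring
        rw [this, hrpq]; ring
      have e2 : rm ^ (k + 2) = 2 * b * rm ^ (k + 1) + rm ^ k := by
        have : rm ^ (k + 2) = rm ^ k * rm ^ 2 := by ring
        rw [this, hrmq]; ring
      rw [hw k, ih1, ih2]
      linear_combination -A * e1 - B * e2
  have hrp1' : rp - 1 ≠ 0 := by linarith
  have hrm1' : rm - 1 ≠ 0 := by linarith
  -- closed form for h
  have hhk : ∀ k, h k = h 0 + Real.sin α *
      (A * (rp ^ k - 1) / (rp - 1) + B * (rm ^ k - 1) / (rm - 1)) := by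
    intro k
    induction k with
    | zero => norm_num
    | succ k ih =>
      have e1 : (rp ^ (k+1) - 1) / (rp - 1) = (rp ^ k - 1) / (rp - 1) + rp ^ k := by
        field_simp
        ring
      have e2 : (rm ^ (k+1) - 1) / (rm - 1) = (rm ^ k - 1) / (rm - 1) + rm ^ k := by
        field_simp
        ring
      rw [hh k, ih, hwk k]
      linear_combination (-(Real.sin α * A)) * e1 + (-(Real.sin α * B)) * e2
  have hrpk0 : ∀ k : ℕ, (rp : ℝ) ^ k ≠ 0 := fun k => (pow_pos hrp0 k).ne'
  -- limits of the geometric sequences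
  have hu : Tendsto (fun k : ℕ => (1 / rp) ^ k) atTop (nhds 0) := by
    apply tendsto_pow_atTop_nhds_zero_of_abs_lt_one
    rw [abs_of_pos (by positivity)]
    rw [div_lt_one hrp0]; linarith
  have hv : Tendsto (fun k : ℕ => (rm / rp) ^ k) atTop (nhds 0) := by
    apply tendsto_pow_atTop_nhds_zero_of_abs_lt_one
    rw [abs_div, abs_of_pos hrp0, div_lt_one hrp0, abs_lt]
    constructor <;> [linarith; linarith]
  -- limit of w k / rp^k
  have hf : Tendsto (fun k => w k / rp ^ k) atTop (nhds A) := by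
    have heq : ∀ k, w k / rp ^ k = A + B * (rm / rp) ^ k := by
      intro k
      rw [hwk k, div_pow]
      field_simp
    have := (hv.const_mul B).const_add A
    simpa [heq] using this
  -- limit of h k / rp^k
  have hg : Tendsto (fun k => h k / rp ^ k) atTop
      (nhds (Real.sin α * (A / (rp - 1)))) := by
    have heq : ∀ k, h k / rp ^ k = h 0 * (1 / rp) ^ k +
        Real.sin α * (A * (1 - (1 / rp) ^ k) / (rp - 1) +
          B * ((rm / rp) ^ k - (1 / rp) ^ k) / (rm - 1)) := by
      intro k
      rw [hhk k, div_pow, div_pow]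
      field_simp
      ring
    have t1 : Tendsto (fun k : ℕ => h 0 * (1 / rp) ^ k) atTop (nhds (h 0 * 0)) :=
      hu.const_mul _
    have t2 : Tendsto (fun k : ℕ => A * (1 - (1 / rp) ^ k) / (rp - 1)) atTop
        (nhds (A * (1 - 0) / (rp - 1))) :=
      ((tendsto_const_nhds.sub hu).const_mul A).div_const _
    have t3 : Tendsto (fun k : ℕ => B * ((rm / rp) ^ k - (1 / rp) ^ k) / (rm - 1)) atTop
        (nhds (B * (0 - 0) / (rm - 1))) :=
      ((hv.sub hu).const_mul B).div_const _
    have := t1.add ((t2.add t3).const_mul (Real.sin α))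
    have hval : h 0 * 0 + Real.sin α * (A * (1 - 0) / (rp - 1) + B * (0 - 0) / (rm - 1))
        = Real.sin α * (A / (rp - 1)) := by ring
    rw [hval] at this
    exact this.congr (fun k => (heq k).symm)
  have hL : Real.sin α * (A / (rp - 1)) ≠ 0 := by
    have : 0 < Real.sin α * (A / (rp - 1)) :=
      mul_pos hsin (div_pos hA (by linarith))
    exact this.ne'
  have final := hf.div hg hL
  have hfg : ∀ k : ℕ, w k / rp ^ k / (h k / rp ^ k) = w k / h k := by
    intro k
    rw [div_div_div_comm, div_self (hrpk0 k), div_one]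
  have hval2 : A / (Real.sin α * (A / (rp - 1))) = (rp - 1) / Real.sin α := by
    field_simp
  rw [hval2] at final
  exact final.congr hfg
end

section
/- Let α ∈ (0, π/2] and R = ((1+cos α) + sqrt((1+cos α)^2+1))^{-1}. Then 4R + R² > 1 and 4R² + R⁴ < 1; consequently the solution s of 4R^s + R^{2s} = 1 lies strictly between 1 and 2. -/
set_option maxHeartbeats 1000000


open Real

/-- For `α ∈ (0, π/2]` and `R = ((1+cos α)+√((1+cos α)²+1))⁻¹` we have
`4R + R² > 1` and `4R² + R⁴ < 1`; consequently any solution `s` of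
`4Rˢ + R^{2s} = 1` satisfies `1 < s < 2`. -/
theorem dimension_between_one_and_two (α : ℝ) (hα : α ∈ Set.Ioc 0 (π / 2))
    (R : ℝ) (hR : R = ((1 + cos α) + Real.sqrt ((1 + cos α) ^ 2 + 1))⁻¹) :
    1 < 4 * R + R ^ 2 ∧ 4 * R ^ 2 + R ^ 4 < 1 ∧
    ∀ s : ℝ, 4 * R ^ s + R ^ (2 * s) = 1 → 1 < s ∧ s < 2 := by
  obtain ⟨hα0, hα2⟩ := hα
  have hπ : (0:ℝ) < π := Real.pi_pos
  have hcos1 : cos α < 1 := by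
    have := Real.cos_lt_cos_of_nonneg_of_le_pi le_rfl (by linarith) hα0
    simpa using this
  have hcos0 : 0 ≤ cos α :=
    Real.cos_nonneg_of_neg_pi_div_two_le_of_le (by linarith) hα2
  set c : ℝ := 1 + cos α with hc
  have hc1 : 1 ≤ c := by simp [hc]; linarith
  have hc2 : c < 2 := by simp [hc]; linarith
  have hs2 : Real.sqrt 2 ≤ Real.sqrt (c ^ 2 + 1) := by
    apply Real.sqrt_le_sqrt; nlinarith
  have hs5 : Real.sqrt (c ^ 2 + 1) < Real.sqrt 5 := by
    apply Real.sqrt_lt_sqrt (by positivity); nlinarith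
  have h2 : Real.sqrt 2 ^ 2 = 2 := Real.sq_sqrt (by norm_num)
  have h5 : Real.sqrt 5 ^ 2 = 5 := Real.sq_sqrt (by norm_num)
  have h2pos : (1.4:ℝ) < Real.sqrt 2 := by
    nlinarith [Real.sqrt_nonneg 2]
  have h5pos : (2:ℝ) < Real.sqrt 5 := by
    nlinarith [Real.sqrt_nonneg 5]
  set D : ℝ := c + Real.sqrt (c ^ 2 + 1) with hD
  have hDlb : 1 + Real.sqrt 2 ≤ D := by simp only [hD]; linarith
  have hDub : D < 2 + Real.sqrt 5 := by simp only [hD]; linarith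
  have hDpos : 0 < D := by nlinarith
  have hRD : R * D = 1 := by
    rw [hR]; field_simp
  have hRpos : 0 < R := by
    rw [hR]; positivity
  -- R > √5 - 2
  have hRlb : Real.sqrt 5 - 2 < R := by
    nlinarith [mul_pos hRpos (sub_pos.mpr hDub)]
  -- R ≤ √2 - 1
  have hRub : R ≤ Real.sqrt 2 - 1 := by
    nlinarith [mul_nonneg hRpos.le (sub_nonneg.mpr hDlb)]
  have hR1 : R < 1 := by nlinarith
  have goal1 : 1 < 4 * R + R ^ 2 := by
    have h' : Real.sqrt 5 < R + 2 := by linarith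
    have hsq : Real.sqrt 5 ^ 2 < (R + 2) ^ 2 :=
      pow_lt_pow_left₀ h' (Real.sqrt_nonneg 5) two_ne_zero
    nlinarith [hsq]
  have goal2 : 4 * R ^ 2 + R ^ 4 < 1 := by
    have h' : R ≤ Real.sqrt 2 - 1 := hRub
    have hsq : R ^ 2 ≤ (Real.sqrt 2 - 1) ^ 2 :=
      pow_le_pow_left₀ hRpos.le h' 2
    have hq : (Real.sqrt 2 - 1) ^ 2 = 3 - 2 * Real.sqrt 2 := by nlinarith [h2]
    have hsq4 : R ^ 4 ≤ (3 - 2 * Real.sqrt 2) ^ 2 := by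
      have : R ^ 4 = (R ^ 2) ^ 2 := by ring
      rw [this]
      exact pow_le_pow_left₀ (by positivity) (by linarith) 2
    nlinarith [hsq, hsq4, h2, h2pos]
  refine ⟨goal1, goal2, fun s hs => ?_⟩
  constructor
  · by_contra h
    push_neg at h
    have h1 : R ≤ R ^ s := by
      calc R = R ^ (1:ℝ) := (Real.rpow_one R).symm
        _ ≤ R ^ s := Real.rpow_le_rpow_of_exponent_ge hRpos hR1.le h
    have h2' : R ^ 2 ≤ R ^ (2*s) := by
      calc R ^ 2 = R ^ ((2:ℝ):ℝ) := by
            rw [← Real.rpow_natCast R 2]; norm_num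
        _ ≤ R ^ (2*s) := Real.rpow_le_rpow_of_exponent_ge hRpos hR1.le (by linarith)
    linarith
  · by_contra h
    push_neg at h
    have h1 : R ^ s ≤ R ^ 2 := by
      calc R ^ s ≤ R ^ ((2:ℝ):ℝ) := Real.rpow_le_rpow_of_exponent_ge hRpos hR1.le (by exact_mod_cast h)
        _ = R ^ 2 := by rw [← Real.rpow_natCast R 2]; norm_num
    have h2' : R ^ (2*s) ≤ R ^ 4 := by
      calc R ^ (2*s) ≤ R ^ ((4:ℝ):ℝ) := Real.rpow_le_rpow_of_exponent_ge hRpos hR1.le (by push_cast; linarith)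
        _ = R ^ 4 := by rw [← Real.rpow_natCast R 4]; norm_num
    linarith
end
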